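/- arXiv:1507.00377 — 2 statements merged into one kernel-verified Lean document; each statement's English description precedes it below -/
import Mathlib

section
/- Let F be a field and n > 1. Suppose every nonscalar matrix in M_n(F) has a nontrivial hyperinvariant subspace. Then for every k > 1 dividing n, every polynomial of degree k over F is reducible over F (i.e., F is k-closed for all such k). -/
/-!
Let `f` be irreducible of degree `k`, `n = k m`, `K = F[X]/(f)` and `V = Kᵐ`, an `n`-dimensional
`F`-space. Multiplication by the root of `f` is a nonscalar `F`-endomorphism of `V` commuting with
every `K`-linear map, and `K`-linear maps carry a given nonzero vector to any vector; hence every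
`F`-subspace invariant under the commutant is `0` or `V`.
-/

open Polynomial Matrix

section

variable {F : Type*} [Field F]

namespace Module.End

variable {V : Type*} [AddCommGroup V] [Module F V]

def IsHyperinvariant (T : Module.End F V) (W : Submodule F V) : Prop :=
  ∀ S : Module.End F V, Commute T S → ∀ x ∈ W, S x ∈ W

end Module.End

theorem Submodule.eq_top_of_forall_linearMap_mem {R K V : Type*} [Semiring R] [DivisionRing K]
    [AddCommGroup V] [Module K V] [Module R V] {W : Submodule R V} (hW : W ≠ ⊥)
    (h : ∀ g : V →ₗ[K] V, ∀ x ∈ W, g x ∈ W) : W = ⊤ := by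
  obtain ⟨x, hxW, hx⟩ := W.exists_mem_ne_zero_of_ne_bot hW
  obtain ⟨φ, hφ⟩ := Module.Projective.exists_dual_ne_zero K hx
  refine W.eq_top_iff'.mpr fun y ↦ ?_
  simpa [smul_smul, mul_inv_cancel₀ hφ] using h (φ.smulRight ((φ x)⁻¹ • y)) x hxW

section

variable {K V : Type*} [Field K] [Algebra F K] [AddCommGroup V] [Module K V] [Module F V]
  [IsScalarTower F K V]

theorem DistribSMul.commute_toLinearMap_restrictScalars (α : K) (g : V →ₗ[K] V) :
    Commute (DistribSMul.toLinearMap F V α) (g.restrictScalars F) :=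
  LinearMap.ext fun v ↦ (g.map_smul α v).symm

theorem Module.End.IsHyperinvariant.eq_bot_or_eq_top {α : K} {W : Submodule F V}
    (hW : Module.End.IsHyperinvariant (DistribSMul.toLinearMap F V α) W) : W = ⊥ ∨ W = ⊤ :=
  or_iff_not_imp_left.mpr fun h ↦ W.eq_top_of_forall_linearMap_mem (K := K) h
    fun g ↦ hW _ (DistribSMul.commute_toLinearMap_restrictScalars α g)

theorem DistribSMul.eq_algebraMap_of_toLinearMap_eq_smul_one [Nontrivial V] {α : K} {c : F}
    (h : DistribSMul.toLinearMap F V α = c • 1) : α = algebraMap F K c := by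
  obtain ⟨v, hv⟩ := exists_ne (0 : V)
  apply smul_left_injective K hv
  simpa [algebraMap_smul] using LinearMap.congr_fun h v

end

theorem exists_isHyperinvariant_of_linearEquiv {V ι : Type*} [AddCommGroup V] [Module F V]
    [Fintype ι] [DecidableEq ι] (e : V ≃ₗ[F] (ι → F))
    (hyp : ∀ A : Matrix ι ι F, (¬ ∃ c : F, A = c • (1 : Matrix ι ι F)) →
      ∃ W : Submodule F (ι → F), W ≠ ⊥ ∧ W ≠ ⊤ ∧
        ∀ B : Matrix ι ι F, A * B = B * A → ∀ x ∈ W, B.mulVec x ∈ W)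
    {T : Module.End F V} (hT : ¬ ∃ c : F, T = c • 1) :
    ∃ W : Submodule F V, W ≠ ⊥ ∧ W ≠ ⊤ ∧ T.IsHyperinvariant W := by
  let ψ : Matrix ι ι F ≃ₐ[F] Module.End F V :=
    Matrix.toLinAlgEquiv'.trans (e.symm.conjAlgEquiv F)
  obtain ⟨W, hW_bot, hW_top, hW⟩ :=
    hyp (ψ.symm T) fun ⟨c, hc⟩ ↦ hT ⟨c, by simpa using congrArg ψ hc⟩
  let Φ := (Submodule.orderIsoMapComap e).symm
  refine ⟨Φ W, (map_eq_bot_iff Φ).not.mpr hW_bot, (map_eq_top_iff Φ).not.mpr hW_top,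
    fun S hS x hx ↦ ?_⟩
  have hψ (B : Matrix ι ι F) (v : V) : ψ B v = e.symm (B *ᵥ e v) := rfl
  have hSx : e (S x) = ψ.symm S *ᵥ e x := by
    rw [← e.apply_symm_apply (_ *ᵥ _), ← hψ, ψ.apply_symm_apply]
  simpa [Φ, Submodule.orderIsoMapComap_symm_apply, hSx] using hW _ (hS.map ψ.symm).eq _ hx

theorem AdjoinRoot.root_ne_algebraMap {f : F[X]} (hf : Irreducible f) (hdeg : 1 < f.natDegree)
    (c : F) : root f ≠ algebraMap F (AdjoinRoot f) c := by
  have := Fact.mk hf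
  intro h
  have hc : f.IsRoot c := (of f).injective <| by
    rw [map_zero, ← eval₂_at_apply, ← eval₂_root f, h, algebraMap_eq]
  have : f.natDegree = 1 :=
    natDegree_eq_of_degree_eq_some (degree_eq_one_of_irreducible_of_root hf hc)
  omega

end

/-- If every nonscalar matrix in `M_n(F)` has a nontrivial
hyperinvariant subspace, then `F` is `k`-closed for every divisor `k > 1` of `n`:
every polynomial of degree `k` over `F` is reducible. -/
theorem stmt9 {F : Type*} [Field F] {n : ℕ} (hn : 1 < n)
    (hyp : ∀ A : Matrix (Fin n) (Fin n) F,
      (¬ ∃ c : F, A = c • (1 : Matrix (Fin n) (Fin n) F)) →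
      ∃ W : Submodule F (Fin n → F), W ≠ ⊥ ∧ W ≠ ⊤ ∧
        ∀ B : Matrix (Fin n) (Fin n) F, A * B = B * A → ∀ x ∈ W, B.mulVec x ∈ W) :
    ∀ k : ℕ, 1 < k → k ∣ n → ∀ f : Polynomial F, f.natDegree = k → ¬ Irreducible f := by
  rintro k hk ⟨m, rfl⟩ f rfl hf
  have := Fact.mk hf
  have : Module.Finite F (AdjoinRoot f) := (AdjoinRoot.powerBasis hf.ne_zero).finite
  have hK : Module.finrank F (AdjoinRoot f) = f.natDegree := finrank_quotient_span_eq_natDegree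
  have : Nonempty (Fin m) := ⟨⟨0, Nat.pos_of_ne_zero (by rintro rfl; omega)⟩⟩
  let e : (Fin m → AdjoinRoot f) ≃ₗ[F] (Fin (f.natDegree * m) → F) :=
    LinearEquiv.ofFinrankEq _ _ (by rw [Module.finrank_pi_fintype, hK]; simp [mul_comm])
  obtain ⟨W, hW_bot, hW_top, hW⟩ := exists_isHyperinvariant_of_linearEquiv e hyp
    (T := DistribSMul.toLinearMap F _ (AdjoinRoot.root f)) fun ⟨c, hc⟩ ↦
      AdjoinRoot.root_ne_algebraMap hf hk c
        (DistribSMul.eq_algebraMap_of_toLinearMap_eq_smul_one hc)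
  exact hW.eq_bot_or_eq_top.elim hW_bot hW_top
end

section
/- Let n be an odd positive integer. Then the only irreducible subalgebra of the algebra of n×n real matrices M_n(ℝ) is M_n(ℝ) itself. (Burnside's Theorem for real matrices of odd size.) -/
/-!
The unital algebra `S` generated by an irreducible family acts simply on `V`. An `S`-linear
endomorphism of `V` has an eigenvalue (for `V = ℝⁿ`, `n` odd, because its characteristic
polynomial has odd degree and real irreducible polynomials have degree at most two), and its
eigenspace is invariant, hence everything: the commutant of `S` is the scalars. Jacobson density
then gives `S = End V`. Finally `End V = K • 1 + 𝒜` makes `𝒜` a nonzero two-sided ideal of the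
simple ring `End V`, so `𝒜 = End V`.
-/

open Module Polynomial

theorem Real.exists_isRoot_of_odd_natDegree {p : ℝ[X]} (hp : Odd p.natDegree) :
    ∃ x, p.IsRoot x := by
  induction hd : p.natDegree using Nat.strong_induction_on generalizing p with
  | _ d ih =>
    subst hd
    have hp0 : p ≠ 0 := by rintro rfl; simp at hp
    have hpu : ¬IsUnit p := fun hu ↦ by simp [natDegree_eq_zero_of_isUnit hu] at hp
    obtain ⟨q, hq, r, rfl⟩ := WfDvdMonoid.exists_irreducible_factor hpu hp0
    rw [natDegree_mul hq.ne_zero (right_ne_zero_of_mul hp0)] at hp ih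
    obtain hq1 | hq2 : q.natDegree = 1 ∨ q.natDegree = 2 := by
      have := hq.natDegree_pos; have := hq.natDegree_le_two; omega
    · obtain ⟨x, hx⟩ := exists_root_of_degree_eq_one
        ((degree_eq_iff_natDegree_eq_of_pos one_pos).mpr hq1)
      exact ⟨x, by simp [hx.eq_zero]⟩
    · obtain ⟨x, hx⟩ := ih r.natDegree (by omega) ((Nat.odd_add'.mp (hq2 ▸ hp)).mpr even_two) rfl
      exact ⟨x, by simp [hx.eq_zero]⟩

theorem Module.End.exists_hasEigenvalue_of_odd_finrank {V : Type*} [AddCommGroup V] [Module ℝ V]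
    [FiniteDimensional ℝ V] (hV : Odd (finrank ℝ V)) (f : End ℝ V) : ∃ c, f.HasEigenvalue c := by
  obtain ⟨c, hc⟩ := Real.exists_isRoot_of_odd_natDegree (f.charpoly_natDegree ▸ hV)
  exact ⟨c, (f.hasEigenvalue_iff_isRoot_charpoly c).mpr hc⟩

theorem NonUnitalSubalgebra.eq_top_of_adjoin_eq_top {R A : Type*} [CommRing R] [Ring A]
    [Algebra R A] [IsSimpleRing A] {s : NonUnitalSubalgebra R A} (hs : s ≠ ⊥)
    (h : Algebra.adjoin R (s : Set A) = ⊤) : s = ⊤ := by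
  have hdecomp (x : A) : ∃ r : R, ∃ a ∈ s, x = algebraMap R A r + a := by
    obtain ⟨y, rfl⟩ : x ∈ (unitization s).range := by simp [unitization_range, h]
    exact ⟨y.fst, y.snd, y.snd.2, rfl⟩
  -- since `A = R • 1 + s`, the subalgebra `s` is a two-sided ideal
  let I : TwoSidedIdeal A := .mk' s s.zero_mem s.add_mem s.neg_mem
    (fun {x y} hy ↦ by
      obtain ⟨r, a, ha, rfl⟩ := hdecomp x
      rw [add_mul, ← Algebra.smul_def]
      exact add_mem (SMulMemClass.smul_mem r hy) (s.mul_mem ha hy))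
    (fun {x y} hx ↦ by
      obtain ⟨r, a, ha, rfl⟩ := hdecomp y
      rw [mul_add, ← Algebra.commutes, ← Algebra.smul_def]
      exact add_mem (SMulMemClass.smul_mem r hx) (s.mul_mem hx ha))
  obtain ⟨x, hx, hx0⟩ : ∃ x ∈ s, x ≠ 0 := by
    by_contra! h0
    exact hs (eq_bot_iff.mpr fun x hx ↦ by simp [h0 x hx])
  have hI : (1 : A) ∈ I := IsSimpleRing.one_mem_of_ne_zero_mem I hx0 (by simpa [I] using hx)
  exact NonUnitalAlgebra.eq_top_iff.mpr fun y ↦ by simpa [I] using I.mul_mem_left y 1 hI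

namespace Module.End

variable {K V : Type*} [Field K] [AddCommGroup V] [Module K V]

instance isSimpleRing [FiniteDimensional K V] [Nontrivial V] : IsSimpleRing (End K V) :=
  haveI : Nonempty (Fin (finrank K V)) := ⟨⟨0, finrank_pos⟩⟩
  .of_ringEquiv (LinearMap.toMatrixAlgEquiv (finBasis K V)).symm.toRingEquiv inferInstance

def IsIrreducible (s : Set (End K V)) : Prop :=
  ∀ W : Submodule K V, (∀ a ∈ s, ∀ x ∈ W, a x ∈ W) → W = ⊥ ∨ W = ⊤

namespace IsIrreducible

variable {s : Set (End K V)}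

theorem eq_smul_one_of_commute (hs : IsIrreducible s) {g : End K V} {c : K}
    (hc : g.HasEigenvalue c) (hg : ∀ a ∈ s, Commute a g) : g = c • 1 := by
  have hinv (a) (ha : a ∈ s) (x) (hx : x ∈ g.eigenspace c) : a x ∈ g.eigenspace c := by
    rw [mem_eigenspace_iff] at hx ⊢
    rw [← mul_apply, ← (hg a ha).eq, mul_apply, hx, map_smul]
  rcases hs _ hinv with hbot | htop
  · exact absurd hbot (hasEigenvalue_iff.mp hc)
  · ext x
    exact mem_eigenspace_iff.mp (htop ▸ Submodule.mem_top)

theorem isSimpleModule_adjoin [Nontrivial V] (hs : IsIrreducible s) :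
    IsSimpleModule (Algebra.adjoin K s) V where
  eq_bot_or_eq_top p := by
    have := hs (p.restrictScalars K) fun a ha x hx ↦ p.smul_mem ⟨a, Algebra.subset_adjoin ha⟩ hx
    simpa only [Submodule.restrictScalars_eq_bot_iff, Submodule.restrictScalars_eq_top_iff]
      using this

theorem exists_eq_smul (hK : ∀ f : End K V, ∃ c, f.HasEigenvalue c)
    (hs : IsIrreducible s) (f : End (Algebra.adjoin K s) V) : ∃ c : K, ∀ v, f v = c • v := by
  obtain ⟨c, hc⟩ := hK (f.restrictScalars K)
  refine ⟨c, fun v ↦ congr($(hs.eq_smul_one_of_commute hc fun a ha ↦ ?_) v)⟩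
  ext v
  exact (f.map_smul ⟨a, Algebra.subset_adjoin ha⟩ v).symm

theorem adjoin_eq_top [FiniteDimensional K V] (hK : ∀ f : End K V, ∃ c, f.HasEigenvalue c)
    (hs : IsIrreducible s) : Algebra.adjoin K s = ⊤ := by
  nontriviality V
  have := hs.isSimpleModule_adjoin
  have := Module.Finite.of_restrictScalars_finite K (End (Algebra.adjoin K s) V) V
  refine eq_top_iff.mpr fun φ _ ↦ ?_
  -- `φ` commutes with the commutant of `s`, which consists of scalars: Jacobson density applies
  let F : End (End (Algebra.adjoin K s) V) V :=
    { toFun := φ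
      map_add' := φ.map_add
      map_smul' f v := by
        obtain ⟨c, hc⟩ := hs.exists_eq_smul hK f
        simp [End.smul_def, hc] }
  obtain ⟨r, hr⟩ := Module.Finite.toModuleEnd_moduleEnd_surjective F
  convert r.2
  ext v
  exact congr($hr v).symm

end IsIrreducible

end Module.End

theorem NonUnitalSubalgebra.eq_top_of_isIrreducible {K V : Type*} [Field K] [AddCommGroup V]
    [Module K V] [FiniteDimensional K V] (hK : ∀ f : End K V, ∃ c, f.HasEigenvalue c)
    {𝒜 : NonUnitalSubalgebra K (End K V)} (h𝒜 : 𝒜 ≠ ⊥)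
    (hirr : End.IsIrreducible (𝒜 : Set (End K V))) : 𝒜 = ⊤ := by
  nontriviality V
  exact eq_top_of_adjoin_eq_top h𝒜 (hirr.adjoin_eq_top hK)

theorem stmt11_general {n : ℕ} (hodd : Odd n)
    (𝒜 : NonUnitalSubalgebra ℝ (Matrix (Fin n) (Fin n) ℝ))
    (hne : ∃ A ∈ 𝒜, A ≠ 0)
    (hirr : ∀ W : Submodule ℝ (Fin n → ℝ),
      (∀ A ∈ 𝒜, ∀ x ∈ W, A.mulVec x ∈ W) → W = ⊥ ∨ W = ⊤) :
    𝒜 = ⊤ := by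
  let 𝒜' := 𝒜.comap (Matrix.toLinAlgEquiv' (R := ℝ) (n := Fin n)).symm
  have hmem (f : End ℝ (Fin n → ℝ)) : f ∈ 𝒜' ↔ LinearMap.toMatrix' f ∈ 𝒜 := Iff.rfl
  have h𝒜' : 𝒜' ≠ ⊥ := by
    obtain ⟨A, hA, hA0⟩ := hne
    intro h
    have hA' : Matrix.toLin' A ∈ 𝒜' := (hmem _).mpr (by simpa using hA)
    rw [h, NonUnitalAlgebra.mem_bot, LinearEquiv.map_eq_zero_iff] at hA'
    exact hA0 hA'
  have hirr' : End.IsIrreducible (𝒜' : Set (End ℝ (Fin n → ℝ))) := fun W hW ↦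
    hirr W fun A hA x hx ↦ by
      simpa using hW (Matrix.toLin' A) ((hmem _).mpr (by simpa using hA)) x hx
  have hK := End.exists_hasEigenvalue_of_odd_finrank (V := Fin n → ℝ) (by rwa [finrank_fin_fun])
  have htop := NonUnitalSubalgebra.eq_top_of_isIrreducible hK h𝒜' hirr'
  exact NonUnitalAlgebra.eq_top_iff.mpr fun A ↦ by
    simpa using (hmem _).mp (NonUnitalAlgebra.eq_top_iff.mp htop (Matrix.toLin' A))

/-- Burnside's Theorem for real matrices of odd size: for odd
`n`, the only irreducible subalgebra of `M_n(ℝ)` is `M_n(ℝ)` itself. -/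
theorem stmt11 {n : ℕ} (hn : 0 < n) (hodd : Odd n)
    (𝒜 : NonUnitalSubalgebra ℝ (Matrix (Fin n) (Fin n) ℝ))
    (hne : ∃ A ∈ 𝒜, A ≠ 0)
    (hirr : ∀ W : Submodule ℝ (Fin n → ℝ),
      (∀ A ∈ 𝒜, ∀ x ∈ W, A.mulVec x ∈ W) → W = ⊥ ∨ W = ⊤) :
    𝒜 = ⊤ :=
  stmt11_general hodd 𝒜 hne hirr
end
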